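/- For a simple random walk on a finite tree T with absorbing vertex a, for any vertex x and any neighbor y of x lying in the tail L(x) (i.e., in the component of T∖x not containing a), the hitting times satisfy H(y,a) − H(x,a) = 2ℓ(y) + 1, where ℓ(y) is the number of edges in the tail of y. -/
import Mathlib


/-- `IsHittingTime G a H` : `H` satisfies the linear system characterizing the expected
hitting times of the absorbing vertex `a` for the simple random walk on `G`. -/
def IsHittingTime {V : Type*} [Fintype V] (G : SimpleGraph V) [DecidableRel G.Adj]
    (a : V) (H : V → ℝ) : Prop :=
  H a = 0 ∧ ∀ x, x ≠ a →
    (G.degree x : ℝ) * H x = (G.degree x : ℝ) + ∑ y ∈ G.neighborFinset x, H y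

/-- The tail `L(v)` of a vertex `v` relative to `a`: the set of vertices `u` each of whose
walks to `a` must pass through `v` (the component of `T ∖ v` not containing `a`,
together with `v` itself). -/
def tail {V : Type*} (G : SimpleGraph V) (a v : V) : Set V :=
  {u | ∀ p : G.Walk u a, v ∈ p.support}

/-- `ℓ(v)`: the number of edges of the subtree spanned by the tail of `v`
(one less than its number of vertices, for a tree). -/
noncomputable def tailEdges {V : Type*} (G : SimpleGraph V) (a v : V) : ℕ :=
  (tail G a v).ncard - 1

open SimpleGraph Walk

section Aux
set_option linter.unusedSectionVars false

variable {V : Type*} [DecidableEq V] {T : SimpleGraph V}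

/-- The unique path between two vertices of a tree. -/
noncomputable def treePath (hT : T.IsTree) (u v : V) : T.Walk u v :=
  (hT.existsUnique_path u v).choose

lemma treePath_isPath (hT : T.IsTree) (u v : V) : (treePath hT u v).IsPath :=
  (hT.existsUnique_path u v).choose_spec.1

lemma treePath_unique (hT : T.IsTree) {u v : V} {p : T.Walk u v} (hp : p.IsPath) :
    p = treePath hT u v :=
  (hT.existsUnique_path u v).choose_spec.2 p hp

lemma mem_tail_iff (hT : T.IsTree) {a u v : V} :
    u ∈ tail T a v ↔ v ∈ (treePath hT u a).support := by
  constructor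
  · exact fun h => h _
  · intro h p
    have h1 : (p.toPath : T.Walk u a) = treePath hT u a := treePath_unique hT p.toPath.2
    exact p.support_toPath_subset (h1 ▸ h)

lemma self_mem_tail {a v : V} : v ∈ tail T a v := fun p => p.start_mem_support

lemma tail_ne_absorb {a x y : V} (hadj : T.Adj x y) (hy : y ∈ tail T a x) : y ≠ a := by
  rintro rfl
  have h := hy Walk.nil
  simp only [Walk.support_nil, List.mem_singleton] at h
  subst h
  exact hadj.ne rfl

lemma eq_of_mem_take_drop {u w v z : V} {P : T.Walk u w} (hP : P.IsPath) (hv : v ∈ P.support)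
    (h1 : z ∈ (P.takeUntil v hv).support) (h2 : z ∈ (P.dropUntil v hv).support) : z = v := by
  by_contra hne
  have hnd : P.support.Nodup := (Walk.isPath_def _).mp hP
  rw [← P.take_spec hv, Walk.support_append] at hnd
  have hdisj := List.disjoint_of_nodup_append hnd
  have h2' : z ∈ (P.dropUntil v hv).support.tail := by
    rw [Walk.support_eq_cons (P.dropUntil v hv)] at h2
    rcases List.mem_cons.mp h2 with h | h
    · exact absurd h hne
    · exact h
  exact hdisj h1 h2'

lemma mem_treePath_of_mem_take (hT : T.IsTree) {u a v z : V}
    (hv : v ∈ (treePath hT u a).support)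
    (hz : z ∈ ((treePath hT u a).takeUntil v hv).support) :
    v ∈ (treePath hT z a).support := by
  have hqp : ((treePath hT u a).takeUntil v hv).IsPath := (treePath_isPath hT u a).takeUntil hv
  have hrp : ((treePath hT u a).dropUntil v hv).IsPath := (treePath_isPath hT u a).dropUntil hv
  have hW : ((((treePath hT u a).takeUntil v hv).dropUntil z hz).append
      ((treePath hT u a).dropUntil v hv)).IsPath := by
    rw [Walk.isPath_def, Walk.support_append]
    apply List.Nodup.append
    · exact (Walk.isPath_def _).mp (hqp.dropUntil hz)
    · exact ((Walk.isPath_def _).mp hrp).tail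
    · intro b hb1 hb2
      have hb1' : b ∈ ((treePath hT u a).takeUntil v hv).support :=
        ((treePath hT u a).takeUntil v hv).support_dropUntil_subset hz hb1
      have hnd : (treePath hT u a).support.Nodup := (Walk.isPath_def _).mp (treePath_isPath hT u a)
      rw [← (treePath hT u a).take_spec hv, Walk.support_append] at hnd
      exact (List.disjoint_of_nodup_append hnd) hb1' hb2
  rw [← treePath_unique hT hW, Walk.mem_support_append_iff]
  left
  exact Walk.end_mem_support _

lemma notMem_tail (hT : T.IsTree) {a v w : V} (hw : w ∈ tail T a v) (hvw : v ≠ w) :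
    v ∉ tail T a w := by
  intro hv
  have hvP : v ∈ (treePath hT w a).support := (mem_tail_iff hT).1 hw
  have hdp : ((treePath hT w a).dropUntil v hvP).IsPath := (treePath_isPath hT w a).dropUntil hvP
  have h2 : w ∈ ((treePath hT w a).dropUntil v hvP).support := by
    rw [treePath_unique hT hdp]
    exact (mem_tail_iff hT).1 hv
  have h1 : w ∈ ((treePath hT w a).takeUntil v hvP).support := Walk.start_mem_support _
  exact hvw (eq_of_mem_take_drop (treePath_isPath hT w a) hvP h1 h2).symm

lemma tail_mono {a y c : V} (hc : c ∈ tail T a y) : tail T a c ⊆ tail T a y := by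
  intro u hu p
  have hcp : c ∈ p.support := hu p
  exact p.support_dropUntil_subset hcp (hc (p.dropUntil c hcp))

lemma tail_dichotomy (hT : T.IsTree) {a u v w : V} (hv : u ∈ tail T a v)
    (hw : u ∈ tail T a w) : v ∈ tail T a w ∨ w ∈ tail T a v := by
  have hvP : v ∈ (treePath hT u a).support := (mem_tail_iff hT).1 hv
  have hwP : w ∈ (treePath hT u a).support := (mem_tail_iff hT).1 hw
  rw [← (treePath hT u a).take_spec hvP, Walk.mem_support_append_iff] at hwP
  rcases hwP with h | h
  · exact Or.inr ((mem_tail_iff hT).2 (mem_treePath_of_mem_take hT hvP h))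
  · left
    have hdp : ((treePath hT u a).dropUntil v hvP).IsPath :=
      (treePath_isPath hT u a).dropUntil hvP
    rw [(mem_tail_iff hT (u := v) (v := w)), ← treePath_unique hT hdp]
    exact h

lemma up_unique (hT : T.IsTree) {a y c c' : V} (h1 : T.Adj y c) (h2 : T.Adj y c')
    (hc : c ∉ tail T a y) (hc' : c' ∉ tail T a y) : c = c' := by
  have hyc : y ∉ (treePath hT c a).support := fun h => hc ((mem_tail_iff hT).2 h)
  have hyc' : y ∉ (treePath hT c' a).support := fun h => hc' ((mem_tail_iff hT).2 h)
  have hp1 : (Walk.cons h1 (treePath hT c a)).IsPath := (treePath_isPath hT c a).cons hyc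
  have hp2 : (Walk.cons h2 (treePath hT c' a)).IsPath := (treePath_isPath hT c' a).cons hyc'
  have heq := (treePath_unique hT hp1).trans (treePath_unique hT hp2).symm
  have h3 := congrArg Walk.support heq
  simp only [Walk.support_cons, List.cons.injEq, true_and] at h3
  rw [Walk.support_eq_cons (treePath hT c a), Walk.support_eq_cons (treePath hT c' a)] at h3
  exact (List.cons_eq_cons.mp h3).1

lemma child_mem_tail (hT : T.IsTree) {a x y c : V} (hadj : T.Adj x y) (hx : x ∉ tail T a y)
    (hc : T.Adj y c) (hne : c ≠ x) : c ∈ tail T a y := by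
  by_contra h
  exact hne (up_unique hT hc hadj.symm h hx)

lemma tails_cross_false (hT : T.IsTree) {a x y : V} (hadj : T.Adj x y) (hx : x ∉ tail T a y)
    {c c' : V} (hc : T.Adj y c) (hcx : c ≠ x) (hc' : T.Adj y c') (hc'x : c' ≠ x)
    (hne : c ≠ c') (hcc' : c' ∈ tail T a c) : False := by
  have hc'y : c' ∈ tail T a y := child_mem_tail hT hadj hx hc' hc'x
  have h1 : y ∉ tail T a c' := notMem_tail hT hc'y hc'.ne
  have h2 : c' ∉ (treePath hT y a).support := fun h => h1 ((mem_tail_iff hT).2 h)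
  have hp : (Walk.cons hc'.symm (treePath hT y a)).IsPath := (treePath_isPath hT y a).cons h2
  have h3 : c ∈ (treePath hT c' a).support := (mem_tail_iff hT).1 hcc'
  rw [← treePath_unique hT hp, Walk.support_cons] at h3
  have h4 : c ∈ (treePath hT y a).support := by
    rcases List.mem_cons.mp h3 with h | h
    · exact absurd h hne
    · exact h
  have h5 : y ∉ (treePath hT x a).support := fun h => hx ((mem_tail_iff hT).2 h)
  have hp2 : (Walk.cons hadj.symm (treePath hT x a)).IsPath := (treePath_isPath hT x a).cons h5
  rw [← treePath_unique hT hp2, Walk.support_cons] at h4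
  have h6 : c ∈ (treePath hT x a).support := by
    rcases List.mem_cons.mp h4 with h | h
    · exact absurd h (Ne.symm hc.ne)
    · exact h
  have h7 : x ∈ tail T a c := (mem_tail_iff hT).2 h6
  have h8 : c ∈ tail T a y := child_mem_tail hT hadj hx hc hcx
  exact hx (tail_mono h8 h7)

lemma exists_child (hT : T.IsTree) {a x y u : V} (hadj : T.Adj x y) (hx : x ∉ tail T a y)
    (hu : u ∈ tail T a y) (hne : u ≠ y) : ∃ c, T.Adj y c ∧ c ≠ x ∧ u ∈ tail T a c := by
  have hyP : y ∈ (treePath hT u a).support := (mem_tail_iff hT).1 hu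
  have hqp : ((treePath hT u a).takeUntil y hyP).IsPath := (treePath_isPath hT u a).takeUntil hyP
  have hnn : ¬ ((treePath hT u a).takeUntil y hyP).reverse.Nil := Walk.not_nil_of_ne (Ne.symm hne)
  obtain ⟨c, h, q', hq'⟩ := Walk.not_nil_iff.mp hnn
  have hcq : c ∈ ((treePath hT u a).takeUntil y hyP).support := by
    have hc1 : c ∈ ((treePath hT u a).takeUntil y hyP).reverse.support := by
      rw [hq', Walk.support_cons]
      exact List.mem_cons_of_mem _ q'.start_mem_support
    rwa [Walk.support_reverse, List.mem_reverse] at hc1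
  refine ⟨c, h, ?_, (mem_tail_iff hT).2 ((treePath hT u a).support_takeUntil_subset hyP hcq)⟩
  intro hcx
  rw [hcx] at hcq
  have hW : y ∈ ((((treePath hT u a).takeUntil y hyP).takeUntil x hcq).append
      (treePath hT x a)).support := hu _
  rw [Walk.mem_support_append_iff] at hW
  rcases hW with hW | hW
  · have h2 : y ∈ (((treePath hT u a).takeUntil y hyP).dropUntil x hcq).support :=
      Walk.end_mem_support _
    exact hadj.ne (eq_of_mem_take_drop hqp hcq hW h2).symm
  · exact hx ((mem_tail_iff hT).2 hW)

lemma tail_ncard_pos [Fintype V] {a y : V} : 0 < (tail T a y).ncard :=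
  (Set.ncard_pos (Set.toFinite _)).mpr ⟨y, self_mem_tail⟩

lemma aux_hitting {V : Type*} [Fintype V] [DecidableEq V] {T : SimpleGraph V}
    [DecidableRel T.Adj] (hT : T.IsTree) (a : V) (H : V → ℝ) (hH : IsHittingTime T a H) :
    ∀ n : ℕ, ∀ x y : V, T.Adj x y → y ∈ tail T a x → (tail T a y).ncard ≤ n →
      H y - H x = 2 * ((tail T a y).ncard : ℝ) - 1 := by
  intro n
  induction n with
  | zero =>
    intro x y hadj hy hle
    have := tail_ncard_pos (T := T) (a := a) (y := y)
    omega
  | succ n ih =>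
    intro x y hadj hy hle
    classical
    have hyne : y ≠ a := tail_ne_absorb hadj hy
    have hx : x ∉ tail T a y := notMem_tail hT hy hadj.ne
    set ch : Finset V := (T.neighborFinset y).erase x with hch
    have hchmem : ∀ c ∈ ch, T.Adj y c ∧ c ≠ x := by
      intro c hc
      rw [hch, Finset.mem_erase, SimpleGraph.mem_neighborFinset] at hc
      exact ⟨hc.2, hc.1⟩
    have hctail : ∀ c ∈ ch, c ∈ tail T a y := fun c hc =>
      child_mem_tail hT hadj hx (hchmem c hc).1 (hchmem c hc).2
    have hyc : ∀ c ∈ ch, y ∉ tail T a c := fun c hc =>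
      notMem_tail hT (hctail c hc) (hchmem c hc).1.ne
    have hcsub : ∀ c ∈ ch, tail T a c ⊆ tail T a y := fun c hc => tail_mono (hctail c hc)
    have hclt : ∀ c ∈ ch, (tail T a c).ncard < (tail T a y).ncard := by
      intro c hc
      refine Set.ncard_lt_ncard ?_ (Set.toFinite _)
      exact (hcsub c hc).ssubset_of_ne (fun heq => hyc c hc (heq ▸ self_mem_tail))
    have hIH : ∀ c ∈ ch, H c - H y = 2 * ((tail T a c).ncard : ℝ) - 1 := fun c hc =>
      ih y c (hchmem c hc).1 (hctail c hc)
        (Nat.lt_succ_iff.mp (lt_of_lt_of_le (hclt c hc) hle))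
    -- the partition of the tail of y
    have hpart : (tail T a y).toFinset
        = insert y (ch.biUnion fun c => (tail T a c).toFinset) := by
      ext u
      simp only [Set.mem_toFinset, Finset.mem_insert, Finset.mem_biUnion]
      constructor
      · intro hu
        by_cases h : u = y
        · exact Or.inl h
        · obtain ⟨c, h1, h2, h3⟩ := exists_child hT hadj hx hu h
          refine Or.inr ⟨c, ?_, h3⟩
          rw [hch, Finset.mem_erase, SimpleGraph.mem_neighborFinset]
          exact ⟨h2, h1⟩
      · rintro (rfl | ⟨c, hc, hu⟩)
        · exact self_mem_tail
        · exact hcsub c hc hu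
    have hynot : y ∉ ch.biUnion fun c => (tail T a c).toFinset := by
      simp only [Finset.mem_biUnion, Set.mem_toFinset, not_exists, not_and]
      exact fun c hc hmem => hyc c hc hmem
    have hdisj : ∀ c ∈ ch, ∀ c' ∈ ch, c ≠ c' →
        Disjoint ((tail T a c).toFinset) ((tail T a c').toFinset) := by
      intro c hc c' hc' hne
      rw [Finset.disjoint_left]
      intro u hu hu'
      rcases tail_dichotomy hT (Set.mem_toFinset.mp hu) (Set.mem_toFinset.mp hu') with h | h
      · exact tails_cross_false hT hadj hx (hchmem c' hc').1 (hchmem c' hc').2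
          (hchmem c hc).1 (hchmem c hc).2 hne.symm h
      · exact tails_cross_false hT hadj hx (hchmem c hc).1 (hchmem c hc).2
          (hchmem c' hc').1 (hchmem c' hc').2 hne h
    have hcard : (tail T a y).ncard = (∑ c ∈ ch, (tail T a c).ncard) + 1 := by
      rw [Set.ncard_eq_toFinset_card', hpart, Finset.card_insert_of_notMem hynot,
        Finset.card_biUnion hdisj]
      simp [Set.ncard_eq_toFinset_card']
    have hxmem : x ∈ T.neighborFinset y := (SimpleGraph.mem_neighborFinset _ _ _).mpr hadj.symm
    have hnx : T.neighborFinset y = insert x ch := by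
      rw [hch, Finset.insert_erase hxmem]
    have hdeg : T.degree y = ch.card + 1 := by
      rw [← SimpleGraph.card_neighborFinset_eq_degree, hnx,
        Finset.card_insert_of_notMem (Finset.notMem_erase _ _)]
    have h0 := hH.2 y hyne
    rw [hnx, Finset.sum_insert (Finset.notMem_erase _ _)] at h0
    have hsum : ∑ c ∈ ch, H c
        = (ch.card : ℝ) * H y + 2 * (∑ c ∈ ch, ((tail T a c).ncard : ℝ)) - ch.card := by
      have hcongr : ∀ c ∈ ch, H c = H y + (2 * ((tail T a c).ncard : ℝ) - 1) := fun c hc => by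
        have := hIH c hc; linarith
      rw [Finset.sum_congr rfl hcongr, Finset.sum_add_distrib, Finset.sum_const,
        Finset.sum_sub_distrib, Finset.sum_const, ← Finset.mul_sum]
      simp only [nsmul_eq_mul]
      ring
    have hM : ((tail T a y).ncard : ℝ) = (∑ c ∈ ch, ((tail T a c).ncard : ℝ)) + 1 := by
      rw [hcard]
      push_cast
      ring_nf
    rw [hdeg] at h0
    push_cast at h0
    linear_combination h0 + hsum - 2 * hM

end Aux

/-- For a simple random walk on a finite tree `T` with absorbing vertex `a`, for any
vertex `x` and any neighbor `y` of `x` lying in the tail of `x`, the hitting times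
satisfy `H(y,a) - H(x,a) = 2ℓ(y) + 1`. -/
theorem tree_tail_hitting_identity {V : Type*} [Fintype V]
    (T : SimpleGraph V) [DecidableRel T.Adj] (htree : T.IsTree)
    (a x y : V) (hadj : T.Adj x y) (hy : y ∈ tail T a x)
    (H : V → ℝ) (hH : IsHittingTime T a H) :
    H y - H x = 2 * (tailEdges T a y : ℝ) + 1 := by
  classical
  have h1 : 0 < (tail T a y).ncard := tail_ncard_pos
  have h2 := aux_hitting htree a H hH ((tail T a y).ncard) x y hadj hy le_rfl
  have h3 : ((tailEdges T a y : ℕ) : ℝ) = ((tail T a y).ncard : ℝ) - 1 := by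
    rw [tailEdges, Nat.cast_sub h1]
    norm_num
  rw [h3]
  linarith
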